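/- The function f(r) = 2E(r) − (1−r²)K(r) is strictly increasing on (0,1), from π/2 (as r → 0⁺) onto 2 (as r → 1⁻). -/

import Mathlib

open Real Set Filter Topology

/-- Complete elliptic integral of the first kind. -/
noncomputable def ellK (r : ℝ) : ℝ :=
  ∫ θ in (0:ℝ)..(π / 2), 1 / Real.sqrt (1 - r ^ 2 * Real.sin θ ^ 2)

/-- Complete elliptic integral of the second kind. -/
noncomputable def ellE (r : ℝ) : ℝ :=
  ∫ θ in (0:ℝ)..(π / 2), Real.sqrt (1 - r ^ 2 * Real.sin θ ^ 2)

/-!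
With `Δ = √(1 - r² sin² θ)`, `2E(r) - (1 - r²)K(r) = ∫₀^{π/2} (2Δ - (1 - r²)/Δ) dθ`. For `|r| ≤ 1`
the integrand lies between `Δ` and `2Δ`, so by dominated convergence the integral is continuous on
`[0, 1]`, with values `π/2` at `0` and `∫ 2 cos θ = 2` at `1`. Differentiating under the integral
sign, the `r`-derivative of the integrand is `r cos² θ / Δ` plus `r` times the `θ`-derivative of
`sin θ cos θ / Δ`, a function vanishing at `θ = 0` and `θ = π/2`; hence the derivative is
`r ∫ cos² θ / Δ > 0` on `(0, 1)`.
-/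

open MeasureTheory

noncomputable def ellDelta (r θ : ℝ) : ℝ := √(1 - r ^ 2 * sin θ ^ 2)

noncomputable def ellFIntegrand (r θ : ℝ) : ℝ := 2 * ellDelta r θ - (1 - r ^ 2) / ellDelta r θ

noncomputable def ellF (r : ℝ) : ℝ := ∫ θ in (0)..(π / 2), ellFIntegrand r θ

section

variable {r : ℝ}

lemma one_sub_sq_mul_sin_sq_nonneg (hr : |r| ≤ 1) (θ : ℝ) : 0 ≤ 1 - r ^ 2 * sin θ ^ 2 := by
  have : r ^ 2 ≤ 1 := by nlinarith [sq_abs r, abs_nonneg r]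
  nlinarith [sin_sq_le_one θ, sq_nonneg (sin θ)]

lemma one_sub_sq_mul_sin_sq_pos (hr : |r| < 1) (θ : ℝ) : 0 < 1 - r ^ 2 * sin θ ^ 2 := by
  have : r ^ 2 < 1 := by nlinarith [sq_abs r, abs_nonneg r]
  nlinarith [sin_sq_le_one θ, sq_nonneg (sin θ)]

lemma sq_ellDelta (hr : |r| ≤ 1) (θ : ℝ) : ellDelta r θ ^ 2 = 1 - r ^ 2 * sin θ ^ 2 :=
  sq_sqrt (one_sub_sq_mul_sin_sq_nonneg hr θ)

lemma ellDelta_nonneg (r θ : ℝ) : 0 ≤ ellDelta r θ := sqrt_nonneg _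

lemma ellDelta_pos (hr : |r| < 1) (θ : ℝ) : 0 < ellDelta r θ :=
  sqrt_pos.mpr (one_sub_sq_mul_sin_sq_pos hr θ)

lemma ellDelta_le_one (r θ : ℝ) : ellDelta r θ ≤ 1 :=
  sqrt_le_one.mpr (by nlinarith [sq_nonneg r, sq_nonneg (sin θ)])

lemma sqrt_one_sub_sq_le_ellDelta (r θ : ℝ) : √(1 - r ^ 2) ≤ ellDelta r θ :=
  sqrt_le_sqrt (by nlinarith [sin_sq_le_one θ, sq_nonneg r])

@[fun_prop]
lemma continuous_ellDelta (r : ℝ) : Continuous (ellDelta r) := by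
  unfold ellDelta; fun_prop

@[fun_prop]
lemma continuous_ellDelta_modulus (θ : ℝ) : Continuous fun r => ellDelta r θ := by
  unfold ellDelta; fun_prop

lemma abs_ellFIntegrand_le (hr : |r| ≤ 1) (θ : ℝ) : |ellFIntegrand r θ| ≤ 2 * ellDelta r θ := by
  have hΔ := ellDelta_nonneg r θ
  have hlow : 0 ≤ (1 - r ^ 2) / ellDelta r θ :=
    div_nonneg (by nlinarith [sq_abs r, abs_nonneg r]) hΔ
  have hup : (1 - r ^ 2) / ellDelta r θ ≤ ellDelta r θ := by
    rcases hΔ.eq_or_lt with h | h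
    · simp [← h]
    · rw [div_le_iff₀ h, ← sq, sq_ellDelta hr]
      nlinarith [sin_sq_le_one θ, sq_nonneg r]
  rw [ellFIntegrand, abs_le]
  constructor <;> linarith

end

lemma continuousWithinAt_ellFIntegrand (r₀ θ : ℝ) :
    ContinuousWithinAt (fun r => ellFIntegrand r θ) (Icc (-1) 1) r₀ := by
  rcases (ellDelta_nonneg r₀ θ).eq_or_lt with h | h
  · have hΔ : Tendsto (fun r => 2 * ellDelta r θ) (𝓝[Icc (-1) 1] r₀) (𝓝 0) := by
      simpa [← h] using (((continuous_ellDelta_modulus θ).tendsto r₀).const_mul 2).mono_left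
        nhdsWithin_le_nhds
    rw [ContinuousWithinAt, show ellFIntegrand r₀ θ = 0 by simp [ellFIntegrand, ← h]]
    refine squeeze_zero_norm' ?_ hΔ
    filter_upwards [self_mem_nhdsWithin] with r hr using abs_ellFIntegrand_le (abs_le.mpr hr) θ
  · refine ContinuousAt.continuousWithinAt ?_
    unfold ellFIntegrand
    exact ContinuousAt.sub (by fun_prop) (ContinuousAt.div (by fun_prop) (by fun_prop) h.ne')

lemma continuousOn_ellF : ContinuousOn ellF (Icc (-1) 1) := fun r₀ _ =>
  intervalIntegral.continuousWithinAt_of_dominated_interval (bound := fun _ => 2)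
    (Eventually.of_forall fun r => by unfold ellFIntegrand ellDelta; fun_prop)
    (eventually_nhdsWithin_of_forall fun r hr => ae_of_all _ fun θ _ =>
      (abs_ellFIntegrand_le (abs_le.mpr hr) θ).trans (by linarith [ellDelta_le_one r θ]))
    intervalIntegrable_const
    (ae_of_all _ fun θ _ => continuousWithinAt_ellFIntegrand r₀ θ)

lemma ellF_zero : ellF 0 = π / 2 := by
  have h (θ : ℝ) : ellFIntegrand 0 θ = 1 := by norm_num [ellFIntegrand, ellDelta]
  simp only [ellF, h, intervalIntegral.integral_const, smul_eq_mul, mul_one, sub_zero]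

lemma ellF_one : ellF 1 = 2 := by
  have h : EqOn (ellFIntegrand 1) (fun θ => 2 * cos θ) (uIcc 0 (π / 2)) := by
    intro θ hθ
    rw [uIcc_of_le (by positivity)] at hθ
    have hcos : 0 ≤ cos θ := cos_nonneg_of_mem_Icc ⟨by linarith [hθ.1, pi_pos], hθ.2⟩
    simp [ellFIntegrand, ellDelta, ← cos_sq', sqrt_sq hcos]
  rw [ellF, intervalIntegral.integral_congr h, intervalIntegral.integral_const_mul, integral_cos]
  simp

section

variable {r : ℝ}

lemma hasDerivAt_ellDelta_modulus (hr : |r| < 1) (θ : ℝ) :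
    HasDerivAt (fun r => ellDelta r θ) (-(r * sin θ ^ 2) / ellDelta r θ) r := by
  refine ((((hasDerivAt_pow 2 r).mul_const (sin θ ^ 2)).const_sub 1).sqrt
    (one_sub_sq_mul_sin_sq_pos hr θ).ne').congr_deriv ?_
  simp only [ellDelta]
  field_simp
  ring

lemma hasDerivAt_ellFIntegrand_modulus (hr : |r| < 1) (θ : ℝ) :
    HasDerivAt (fun r => ellFIntegrand r θ)
      (r * (2 * cos θ ^ 2 * ellDelta r θ ^ 2 - (1 - r ^ 2) * sin θ ^ 2) / ellDelta r θ ^ 3) r := by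
  have hΔ := hasDerivAt_ellDelta_modulus hr θ
  have hpos := ellDelta_pos hr θ
  refine ((hΔ.const_mul 2).sub (((hasDerivAt_pow 2 r).const_sub 1).div hΔ hpos.ne')).congr_deriv ?_
  field_simp
  linear_combination (-2 * r * ellDelta r θ ^ 2) * sin_sq_add_cos_sq θ

lemma hasDerivAt_sin_mul_cos_div_ellDelta (hr : |r| < 1) (θ : ℝ) :
    HasDerivAt (fun θ => sin θ * cos θ / ellDelta r θ)
      ((cos θ ^ 2 - sin θ ^ 2) / ellDelta r θ + r ^ 2 * sin θ ^ 2 * cos θ ^ 2 / ellDelta r θ ^ 3)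
      θ := by
  have hpos := ellDelta_pos hr θ
  have hΔ : HasDerivAt (fun θ => ellDelta r θ)
      (-(r ^ 2 * (2 * sin θ * cos θ)) / (2 * ellDelta r θ)) θ := by
    refine ((((hasDerivAt_sin θ).pow 2).const_mul (r ^ 2)).const_sub 1).sqrt
      (one_sub_sq_mul_sin_sq_pos hr θ).ne' |>.congr_deriv ?_
    simp only [ellDelta, Pi.pow_apply]
    ring
  refine (((hasDerivAt_sin θ).mul (hasDerivAt_cos θ)).div hΔ hpos.ne').congr_deriv ?_
  simp only [Pi.mul_apply]
  field_simp
  ring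

lemma integral_deriv_ellFIntegrand_modulus (hr : |r| < 1) :
    ∫ θ in (0)..(π / 2),
        r * (2 * cos θ ^ 2 * ellDelta r θ ^ 2 - (1 - r ^ 2) * sin θ ^ 2) / ellDelta r θ ^ 3 =
      r * ∫ θ in (0)..(π / 2), cos θ ^ 2 / ellDelta r θ := by
  have hne : ∀ θ, ellDelta r θ ≠ 0 := fun θ => (ellDelta_pos hr θ).ne'
  have hW : Continuous fun θ => (cos θ ^ 2 - sin θ ^ 2) / ellDelta r θ +
      r ^ 2 * sin θ ^ 2 * cos θ ^ 2 / ellDelta r θ ^ 3 := by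
    fun_prop (disch := intro; simp [hne])
  have hC : Continuous fun θ => cos θ ^ 2 / ellDelta r θ := by
    fun_prop (disch := intro; simp [hne])
  have hsplit : ∀ θ, r * (2 * cos θ ^ 2 * ellDelta r θ ^ 2 - (1 - r ^ 2) * sin θ ^ 2) /
      ellDelta r θ ^ 3 = r * (cos θ ^ 2 / ellDelta r θ) + r * ((cos θ ^ 2 - sin θ ^ 2) /
        ellDelta r θ + r ^ 2 * sin θ ^ 2 * cos θ ^ 2 / ellDelta r θ ^ 3) := by
    intro θ
    have := hne θ
    field_simp
    linear_combination (r * sin θ ^ 2) * sq_ellDelta hr.le θ -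
      r ^ 3 * sin θ ^ 2 * sin_sq_add_cos_sq θ
  have hW0 : ∫ θ in (0)..(π / 2), ((cos θ ^ 2 - sin θ ^ 2) / ellDelta r θ +
      r ^ 2 * sin θ ^ 2 * cos θ ^ 2 / ellDelta r θ ^ 3) = 0 := by
    rw [intervalIntegral.integral_eq_sub_of_hasDerivAt
      (fun θ _ => hasDerivAt_sin_mul_cos_div_ellDelta hr θ) (hW.intervalIntegrable _ _)]
    simp
  simp_rw [hsplit]
  rw [intervalIntegral.integral_add ((hC.const_mul r).intervalIntegrable _ _)
    ((hW.const_mul r).intervalIntegrable _ _), intervalIntegral.integral_const_mul,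
    intervalIntegral.integral_const_mul, hW0, mul_zero, add_zero]

lemma integral_cos_sq_div_ellDelta_pos (hr : |r| < 1) :
    0 < ∫ θ in (0)..(π / 2), cos θ ^ 2 / ellDelta r θ := by
  refine intervalIntegral.intervalIntegral_pos_of_pos_on ?_ (fun θ hθ => ?_) (by positivity)
  · exact (by fun_prop (disch := intro; simp [(ellDelta_pos hr _).ne']) :
      Continuous fun θ => cos θ ^ 2 / ellDelta r θ).intervalIntegrable _ _
  · have : 0 < cos θ := cos_pos_of_mem_Ioo ⟨by linarith [hθ.1, pi_pos], hθ.2⟩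
    exact div_pos (by positivity) (ellDelta_pos hr θ)

end

lemma abs_deriv_ellFIntegrand_modulus_le {x R : ℝ} (hR : R < 1) (hx : |x| ≤ R) (θ : ℝ) :
    |x * (2 * cos θ ^ 2 * ellDelta x θ ^ 2 - (1 - x ^ 2) * sin θ ^ 2) / ellDelta x θ ^ 3| ≤
      2 / √(1 - R ^ 2) ^ 3 := by
  have hx1 : |x| < 1 := hx.trans_lt hR
  have hm : 0 < √(1 - R ^ 2) := sqrt_pos.mpr (by nlinarith [abs_nonneg x])
  have hmΔ : √(1 - R ^ 2) ≤ ellDelta x θ :=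
    (sqrt_le_sqrt (by nlinarith [sq_abs x, abs_nonneg x])).trans (sqrt_one_sub_sq_le_ellDelta x θ)
  have hx2 : x ^ 2 ≤ 1 := by nlinarith [sq_abs x, abs_nonneg x]
  rw [abs_div, abs_of_pos (pow_pos (ellDelta_pos hx1 θ) 3)]
  refine div_le_div₀ zero_le_two ?_ (pow_pos hm 3) (by gcongr)
  rw [abs_mul, ← one_mul 2]
  refine mul_le_mul hx1.le ?_ (abs_nonneg _) zero_le_one
  rw [abs_le]
  constructor <;> nlinarith [sq_ellDelta hx1.le θ, sin_sq_le_one θ, cos_sq_le_one θ,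
    sq_nonneg (sin θ), sq_nonneg (cos θ),
    mul_nonneg (sq_nonneg (cos θ)) (sq_nonneg (ellDelta x θ)),
    mul_nonneg (sub_nonneg.mpr hx2) (sq_nonneg (sin θ))]

lemma hasDerivAt_ellF {r₀ : ℝ} (hr₀ : |r₀| < 1) :
    HasDerivAt ellF (r₀ * ∫ θ in (0)..(π / 2), cos θ ^ 2 / ellDelta r₀ θ) r₀ := by
  obtain ⟨R, hr₀R, hR⟩ := exists_between hr₀
  have hnhds : Icc (-R) R ∈ 𝓝 r₀ := Icc_mem_nhds (by linarith [neg_abs_le r₀]) (lt_of_abs_lt hr₀R)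
  have hint : Continuous (ellFIntegrand r₀) := by
    unfold ellFIntegrand
    fun_prop (disch := intro; simp [(ellDelta_pos hr₀ _).ne'])
  rw [← integral_deriv_ellFIntegrand_modulus hr₀]
  refine (intervalIntegral.hasDerivAt_integral_of_dominated_loc_of_deriv_le
    (bound := fun _ => 2 / √(1 - R ^ 2) ^ 3) hnhds
    (Eventually.of_forall fun r => by unfold ellFIntegrand ellDelta; fun_prop)
    (hint.intervalIntegrable _ _) (Continuous.aestronglyMeasurable ?_)
    (ae_of_all _ fun θ _ x hx => abs_deriv_ellFIntegrand_modulus_le hR (abs_le.mpr hx) θ)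
    intervalIntegrable_const
    (ae_of_all _ fun θ _ x hx =>
      hasDerivAt_ellFIntegrand_modulus ((abs_le.mpr hx).trans_lt hR) θ)).2
  fun_prop (disch := intro; simp [(ellDelta_pos hr₀ _).ne'])

lemma strictMonoOn_ellF : StrictMonoOn ellF (Icc 0 1) := by
  refine strictMonoOn_of_deriv_pos (convex_Icc 0 1)
    (continuousOn_ellF.mono (Icc_subset_Icc (by norm_num) le_rfl)) fun r hr => ?_
  rw [interior_Icc] at hr
  have hr1 : |r| < 1 := abs_lt.mpr ⟨by linarith [hr.1], hr.2⟩
  rw [(hasDerivAt_ellF hr1).deriv]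
  exact mul_pos hr.1 (integral_cos_sq_div_ellDelta_pos hr1)

lemma two_mul_ellE_sub_eq_ellF {r : ℝ} (hr : |r| < 1) :
    2 * ellE r - (1 - r ^ 2) * ellK r = ellF r := by
  have hK : Continuous fun θ => 1 / ellDelta r θ := by
    fun_prop (disch := intro; simp [(ellDelta_pos hr _).ne'])
  change 2 * (∫ θ in (0)..(π / 2), ellDelta r θ) - (1 - r ^ 2) * ∫ θ in (0)..(π / 2), 1 / ellDelta r θ
    = ellF r
  rw [ellF, ← intervalIntegral.integral_const_mul, ← intervalIntegral.integral_const_mul,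
    ← intervalIntegral.integral_sub (((continuous_ellDelta r).const_mul 2).intervalIntegrable _ _)
      ((hK.const_mul _).intervalIntegrable _ _)]
  simp only [ellFIntegrand, mul_one_div]

/-- `r ↦ 2E(r) − (1−r²)K(r)` is strictly increasing from `(0,1)` onto `(π/2, 2)`. -/
theorem strictMonoOn_two_ellE_sub :
    StrictMonoOn (fun r : ℝ => 2 * ellE r - (1 - r ^ 2) * ellK r) (Ioo 0 1) ∧
    Tendsto (fun r : ℝ => 2 * ellE r - (1 - r ^ 2) * ellK r) (𝓝[>] 0) (𝓝 (π / 2)) ∧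
    Tendsto (fun r : ℝ => 2 * ellE r - (1 - r ^ 2) * ellK r) (𝓝[<] 1) (𝓝 2) ∧
    (fun r : ℝ => 2 * ellE r - (1 - r ^ 2) * ellK r) '' Ioo 0 1 = Ioo (π / 2) 2 := by
  have hf : EqOn (fun r : ℝ => 2 * ellE r - (1 - r ^ 2) * ellK r) ellF (Ioo 0 1) :=
    fun r hr => two_mul_ellE_sub_eq_ellF (abs_lt.mpr ⟨by linarith [hr.1], hr.2⟩)
  have hcont : ContinuousOn ellF (Icc 0 1) :=
    continuousOn_ellF.mono (Icc_subset_Icc (by norm_num) le_rfl)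
  refine ⟨strictMonoOn_ellF.mono Ioo_subset_Icc_self |>.congr hf.symm, ?_, ?_, ?_⟩
  · have h0 := ((hcont 0 (left_mem_Icc.mpr zero_le_one)).mono Ioo_subset_Icc_self).tendsto
    rw [ellF_zero] at h0
    rw [← nhdsWithin_Ioo_eq_nhdsGT zero_lt_one]
    exact h0.congr' hf.eventuallyEq_nhdsWithin.symm
  · have h1 := ((hcont 1 (right_mem_Icc.mpr zero_le_one)).mono Ioo_subset_Icc_self).tendsto
    rw [ellF_one] at h1
    rw [← nhdsWithin_Ioo_eq_nhdsLT zero_lt_one]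
    exact h1.congr' hf.eventuallyEq_nhdsWithin.symm
  · rw [hf.image_eq, hcont.image_Ioo_of_strictMonoOn zero_le_one strictMonoOn_ellF, ellF_zero,
      ellF_one]
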